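/- Acceleration telescoping lemma: let f : X → ℝ be convex on a convex set Q, let x* minimize f over Q, let α_0 = 1 and α_k ≥ 1 satisfy α_k² ≤ α_k + α_{k-1}² for all k ≥ 1, and let sequences x_k ∈ Q, \bar{x}_0 = x_0, \bar{x}_{k+1} = x_{k+1}/α_k + (1 − 1/α_k)\bar{x}_k, all lying in Q. Define f_k(x) = α_k² f(x/α_k + (1 − 1/α_k)\bar{x}_k). Then α_K² (f(\bar{x}_{K+1}) − f(x*)) ≤ Σ_{k=0}^{K} [f_k(x_{k+1}) − f_k(x*)]. -/

import Mathlib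

open Matrix
open scoped Classical

/-- The positive semidefinite square root of a matrix (zero if not PSD). -/
noncomputable def sqrtM {n : ℕ} (A : Matrix (Fin n) (Fin n) ℝ) : Matrix (Fin n) (Fin n) ℝ :=
  if h : A.PosSemidef then
    (h.1.eigenvectorUnitary : Matrix (Fin n) (Fin n) ℝ) *
      diagonal (fun i => Real.sqrt (h.1.eigenvalues i)) *
      (star h.1.eigenvectorUnitary : Matrix (Fin n) (Fin n) ℝ)
  else 0

/-- Euclidean norm of a vector. -/
noncomputable def euclNorm {n : ℕ} (v : Fin n → ℝ) : ℝ := Real.sqrt (v ⬝ᵥ v)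

/-- The ℓ₂ operator (spectral) norm of a matrix. -/
noncomputable def opNorm {n : ℕ} (A : Matrix (Fin n) (Fin n) ℝ) : ℝ :=
  ⨆ u : {u : Fin n → ℝ // euclNorm u ≤ 1}, euclNorm (A *ᵥ u)

/-!
Write `f_*` for the minimum value. Convexity at the weights `1/α_k`, `1 - 1/α_k` bounds the
gap `f_k(x*) - α_k² f_*` by `(α_k² - α_k) (f(x̄_k) - f_*)`, hence, by `α_k² - α_k ≤ α_{k-1}²`
and nonnegativity of the gap, by the previous potential `α_{k-1}² (f(x̄_k) - f_*)`. Since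
`f_k(x_{k+1}) = α_k² f(x̄_{k+1})`, the potential increases by at most `f_k(x_{k+1}) - f_k(x*)`
per step, and the inequality telescopes.
-/

theorem le_sum_range_of_le_add {M : Type*} [AddCommMonoid M] [PartialOrder M]
    [IsOrderedAddMonoid M] {e s : ℕ → M} (h0 : e 0 ≤ s 0)
    (hs : ∀ k, e (k + 1) ≤ e k + s (k + 1)) (K : ℕ) :
    e K ≤ ∑ k ∈ Finset.range (K + 1), s k := by
  induction K with
  | zero => simpa using h0
  | succ K ih =>
    rw [Finset.sum_range_succ]
    exact (hs K).trans (by gcongr)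

namespace ConvexOn

variable {E : Type*} [AddCommGroup E] [Module ℝ E] {Q : Set E} {f : E → ℝ} {y z : E} {a b : ℝ}

theorem sq_mul_map_inv_smul_add_le (hf : ConvexOn ℝ Q f) (hy : y ∈ Q) (hz : z ∈ Q)
    (ha : 1 ≤ a) :
    a ^ 2 * f (a⁻¹ • y + (1 - a⁻¹) • z) ≤ a * f y + (a ^ 2 - a) * f z := by
  have ha₀ : 0 < a := zero_lt_one.trans_le ha
  have hconv : f (a⁻¹ • y + (1 - a⁻¹) • z) ≤ a⁻¹ * f y + (1 - a⁻¹) * f z :=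
    hf.2 hy hz (inv_nonneg.2 ha₀.le) (sub_nonneg.2 (inv_le_one_of_one_le₀ ha))
      (add_sub_cancel _ _)
  calc a ^ 2 * f (a⁻¹ • y + (1 - a⁻¹) • z)
      ≤ a ^ 2 * (a⁻¹ * f y + (1 - a⁻¹) * f z) := by gcongr
    _ = a * f y + (a ^ 2 - a) * f z := by field_simp

theorem sq_mul_map_inv_smul_add_sub_le (hf : ConvexOn ℝ Q f) (hy : y ∈ Q) (hz : z ∈ Q)
    (hyz : f y ≤ f z) (ha : 1 ≤ a) (hab : a ^ 2 - a ≤ b ^ 2) :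
    a ^ 2 * (f (a⁻¹ • y + (1 - a⁻¹) • z) - f y) ≤ b ^ 2 * (f z - f y) := by
  have hgap : (a ^ 2 - a) * (f z - f y) ≤ b ^ 2 * (f z - f y) :=
    mul_le_mul_of_nonneg_right hab (sub_nonneg.2 hyz)
  linarith [hf.sq_mul_map_inv_smul_add_le hy hz ha]

end ConvexOn

theorem acceleration_telescoping_general {E : Type*} [AddCommGroup E] [Module ℝ E]
    {Q : Set E} (f : E → ℝ) (hf : ConvexOn ℝ Q f)
    (xstar : E) (hxs : xstar ∈ Q) (hmin : ∀ y ∈ Q, f xstar ≤ f y)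
    (α : ℕ → ℝ) (hα0 : α 0 = 1) (hα1 : ∀ k, 1 ≤ α k)
    (hαrec : ∀ k, 1 ≤ k → α k ^ 2 ≤ α k + α (k - 1) ^ 2)
    (x xb : ℕ → E) (hxbQ : ∀ k, xb k ∈ Q)
    (hxb : ∀ k, xb (k + 1) = (α k)⁻¹ • x (k + 1) + (1 - (α k)⁻¹) • xb k)
    (K : ℕ) :
    α K ^ 2 * (f (xb (K + 1)) - f xstar)
      ≤ ∑ k ∈ Finset.range (K + 1),
          (α k ^ 2 * f ((α k)⁻¹ • x (k + 1) + (1 - (α k)⁻¹) • xb k)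
            - α k ^ 2 * f ((α k)⁻¹ • xstar + (1 - (α k)⁻¹) • xb k)) := by
  refine le_sum_range_of_le_add (e := fun k ↦ α k ^ 2 * (f (xb (k + 1)) - f xstar))
    ?_ (fun k ↦ ?_) K
  · simp [hα0, hxb 0]
  · have hrec := hαrec (k + 1) le_add_self
    rw [Nat.add_sub_cancel] at hrec
    have hgap := hf.sq_mul_map_inv_smul_add_sub_le (b := α k) hxs (hxbQ (k + 1))
      (hmin _ (hxbQ _)) (hα1 (k + 1)) (by linarith)
    rw [← hxb (k + 1)]
    linarith

theorem acceleration_telescoping {E : Type*} [AddCommGroup E] [Module ℝ E]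
    {Q : Set E} (hQ : Convex ℝ Q) (f : E → ℝ) (hf : ConvexOn ℝ Q f)
    (xstar : E) (hxs : xstar ∈ Q) (hmin : ∀ y ∈ Q, f xstar ≤ f y)
    (α : ℕ → ℝ) (hα0 : α 0 = 1) (hα1 : ∀ k, 1 ≤ α k)
    (hαrec : ∀ k, 1 ≤ k → α k ^ 2 ≤ α k + α (k - 1) ^ 2)
    (x xb : ℕ → E) (hxQ : ∀ k, x k ∈ Q) (hxbQ : ∀ k, xb k ∈ Q)
    (hxb0 : xb 0 = x 0)
    (hxb : ∀ k, xb (k + 1) = (α k)⁻¹ • x (k + 1) + (1 - (α k)⁻¹) • xb k)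
    (K : ℕ) :
    α K ^ 2 * (f (xb (K + 1)) - f xstar)
      ≤ ∑ k ∈ Finset.range (K + 1),
          (α k ^ 2 * f ((α k)⁻¹ • x (k + 1) + (1 - (α k)⁻¹) • xb k)
            - α k ^ 2 * f ((α k)⁻¹ • xstar + (1 - (α k)⁻¹) • xb k)) :=
  acceleration_telescoping_general f hf xstar hxs hmin α hα0 hα1 hαrec x xb hxbQ hxb K
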